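/- arXiv:1910.06549 — 3 statements merged into one kernel-verified Lean document; each statement's English description precedes it below -/
import Mathlib

section
/- Let M be a von Neumann algebra, I an index set, and (x_i)_{i∈I}, (y_i)_{i∈I} families in M such that the finite partial sums Σ_{i∈J} x_i* x_i (for finite J ⊆ I) are uniformly bounded in norm, and likewise the partial sums Σ_{i∈J} y_i y_i* are uniformly bounded. Then the family (y_i x_i)_{i∈I} is summable in the weak* (ultraweak) topology of M, and the norm of the sum satisfies ‖Σ_i y_i x_i‖ ≤ sup_J ‖Σ_{i∈J} y_i y_i*‖^{1/2} · sup_J ‖Σ_{i∈J} x_i* x_i‖^{1/2}. -/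
open scoped InnerProductSpace

/-!
By Cauchy–Schwarz, `|⟪ξ, yᵢ xᵢ η⟫| ≤ ‖yᵢ* ξ‖ ‖xᵢ η‖`, while `∑ ‖xᵢ η‖² = re ⟪(∑ xᵢ* xᵢ) η, η⟫ ≤ cx ‖η‖²`
and likewise `∑ ‖yᵢ* ξ‖² ≤ cy ‖ξ‖²`. Hence the matrix coefficients of `(yᵢ xᵢ)` are absolutely
summable, uniformly bounded by `√cy √cx ‖ξ‖ ‖η‖`, and their sums form a bounded sesquilinear form,
which by the Riesz representation theorem is `⟪ξ, z η⟫` for an operator `z` with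
`‖z‖ ≤ √cy √cx`. Any operator commuting with every `yᵢ xᵢ` then commutes with `z`, so `z` lies in
the bicommutant of `M`, which is `M`.
-/

open ContinuousLinearMap InnerProductSpace RCLike

section

variable {𝕜 H I : Type*} [RCLike 𝕜] [NormedAddCommGroup H] [InnerProductSpace 𝕜 H]

lemma exists_sesqForm_hasSum_inner_of_sum_norm_le (w : I → H →L[𝕜] H) {C : ℝ} (hC : 0 ≤ C)
    (hw : ∀ ξ η (J : Finset I), ∑ i ∈ J, ‖⟪ξ, w i η⟫_𝕜‖ ≤ C * (‖ξ‖ * ‖η‖)) :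
    ∃ B : H →L⋆[𝕜] H →L[𝕜] 𝕜, ‖B‖ ≤ C ∧ ∀ ξ η, HasSum (fun i => ⟪ξ, w i η⟫_𝕜) (B ξ η) := by
  have hsum (ξ η : H) : Summable fun i => ‖⟪ξ, w i η⟫_𝕜‖ :=
    summable_of_sum_le (fun _ => norm_nonneg _) (hw ξ η)
  let B := LinearMap.mk₂'ₛₗ (starRingEnd 𝕜) (RingHom.id 𝕜) (fun ξ η => ∑' i, ⟪ξ, w i η⟫_𝕜)
    (fun ξ₁ ξ₂ η => by
      simp only [inner_add_left]; exact (hsum ξ₁ η).of_norm.tsum_add (hsum ξ₂ η).of_norm)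
    (fun c ξ η => by simp only [inner_smul_left, smul_eq_mul]; exact tsum_mul_left)
    (fun ξ η₁ η₂ => by
      simp only [map_add, inner_add_right]
      exact (hsum ξ η₁).of_norm.tsum_add (hsum ξ η₂).of_norm)
    (fun c ξ η => by
      simp only [map_smul, inner_smul_right, RingHom.id_apply, smul_eq_mul]
      exact tsum_mul_left)
  have hB (ξ η : H) : ‖B ξ η‖ ≤ C * ‖ξ‖ * ‖η‖ :=
    calc ‖∑' i, ⟪ξ, w i η⟫_𝕜‖ ≤ ∑' i, ‖⟪ξ, w i η⟫_𝕜‖ := norm_tsum_le_tsum_norm (hsum ξ η)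
      _ ≤ C * ‖ξ‖ * ‖η‖ := by
        rw [mul_assoc]; exact (hsum ξ η).tsum_le_of_sum_le (hw ξ η)
  exact ⟨B.mkContinuous₂ C hB, B.mkContinuous₂_norm_le hC hB,
    fun ξ η => (hsum ξ η).of_norm.hasSum⟩

variable [CompleteSpace H]

lemma ContinuousLinearMap.sum_norm_sq_apply_le (x : I → H →L[𝕜] H) (J : Finset I) (η : H) :
    ∑ i ∈ J, ‖x i η‖ ^ 2 ≤ ‖∑ i ∈ J, star (x i) * x i‖ * ‖η‖ ^ 2 :=
  calc ∑ i ∈ J, ‖x i η‖ ^ 2 = re ⟪(∑ i ∈ J, star (x i) * x i) η, η⟫_𝕜 := by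
        simp only [apply_norm_sq_eq_inner_adjoint_left, sum_apply, sum_inner, map_sum,
          star_eq_adjoint, mul_def]
    _ ≤ ‖(∑ i ∈ J, star (x i) * x i) η‖ * ‖η‖ := re_inner_le_norm _ _
    _ ≤ ‖∑ i ∈ J, star (x i) * x i‖ * ‖η‖ ^ 2 := by
        rw [pow_two, ← mul_assoc]
        exact mul_le_mul_of_nonneg_right (le_opNorm _ _) (norm_nonneg _)

lemma ContinuousLinearMap.sum_norm_inner_mul_apply_le (x y : I → H →L[𝕜] H) (J : Finset I)
    {cx cy : ℝ} (hx : ‖∑ i ∈ J, star (x i) * x i‖ ≤ cx)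
    (hy : ‖∑ i ∈ J, y i * star (y i)‖ ≤ cy) (ξ η : H) :
    ∑ i ∈ J, ‖⟪ξ, (y i * x i) η⟫_𝕜‖ ≤ √cy * √cx * (‖ξ‖ * ‖η‖) := by
  have hrow : ∑ i ∈ J, ‖star (y i) ξ‖ ^ 2 ≤ cy * ‖ξ‖ ^ 2 := by
    refine (sum_norm_sq_apply_le (fun i => star (y i)) J ξ).trans ?_
    simp only [star_star]
    gcongr
  have hcol : ∑ i ∈ J, ‖x i η‖ ^ 2 ≤ cx * ‖η‖ ^ 2 :=
    (sum_norm_sq_apply_le x J η).trans (by gcongr)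
  calc ∑ i ∈ J, ‖⟪ξ, (y i * x i) η⟫_𝕜‖
      = ∑ i ∈ J, ‖⟪star (y i) ξ, x i η⟫_𝕜‖ := by
        simp only [mul_apply_eq_comp, star_eq_adjoint, adjoint_inner_left]
    _ ≤ ∑ i ∈ J, ‖star (y i) ξ‖ * ‖x i η‖ := Finset.sum_le_sum fun i _ => norm_inner_le_norm _ _
    _ ≤ √(∑ i ∈ J, ‖star (y i) ξ‖ ^ 2) * √(∑ i ∈ J, ‖x i η‖ ^ 2) :=
        Real.sum_mul_le_sqrt_mul_sqrt _ _ _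
    _ ≤ √(cy * ‖ξ‖ ^ 2) * √(cx * ‖η‖ ^ 2) := by gcongr
    _ = √cy * √cx * (‖ξ‖ * ‖η‖) := by
        rw [Real.sqrt_mul' _ (sq_nonneg _), Real.sqrt_mul' _ (sq_nonneg _),
          Real.sqrt_sq (norm_nonneg _), Real.sqrt_sq (norm_nonneg _)]
        ring

lemma InnerProductSpace.exists_opNorm_le_inner_apply_eq (B : H →L⋆[𝕜] H →L[𝕜] 𝕜) :
    ∃ z : H →L[𝕜] H, ‖z‖ ≤ ‖B‖ ∧ ∀ ξ η, ⟪ξ, z η⟫_𝕜 = B ξ η := by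
  refine ⟨adjoint (continuousLinearMapOfBilin B), ?_, fun ξ η => ?_⟩
  · rw [LinearIsometryEquiv.norm_map]
    refine opNorm_le_bound _ (norm_nonneg B) fun ξ => ?_
    rw [show continuousLinearMapOfBilin B ξ = (toDual 𝕜 H).symm (B ξ) from rfl,
      LinearIsometryEquiv.norm_map]
    exact le_opNorm B ξ
  · rw [adjoint_inner_right, continuousLinearMapOfBilin_apply]

lemma ContinuousLinearMap.commute_of_hasSum_inner {w : I → H →L[𝕜] H} {z T : H →L[𝕜] H}
    (hz : ∀ ξ η, HasSum (fun i => ⟪ξ, w i η⟫_𝕜) ⟪ξ, z η⟫_𝕜) (hT : ∀ i, Commute T (w i)) :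
    Commute T z := by
  ext η
  refine ext_inner_left 𝕜 fun ξ => ?_
  calc ⟪ξ, T (z η)⟫_𝕜 = ⟪adjoint T ξ, z η⟫_𝕜 := (adjoint_inner_left T _ ξ).symm
    _ = ⟪ξ, z (T η)⟫_𝕜 := (hz _ η).unique <| by
        convert hz ξ (T η) using 2 with i
        rw [adjoint_inner_left, ← mul_apply_eq_comp, (hT i).eq, mul_apply_eq_comp]

end

lemma VonNeumannAlgebra.mem_of_hasSum_inner {H I : Type*} [NormedAddCommGroup H]
    [InnerProductSpace ℂ H] [CompleteSpace H] (M : VonNeumannAlgebra H)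
    {w : I → H →L[ℂ] H} {z : H →L[ℂ] H} (hw : ∀ i, w i ∈ M)
    (hz : ∀ ξ η, HasSum (fun i => ⟪ξ, w i η⟫_ℂ) ⟪ξ, z η⟫_ℂ) : z ∈ M := by
  rw [← SetLike.mem_coe, ← M.centralizer_centralizer]
  exact fun T hT => (commute_of_hasSum_inner hz fun i => (hT (w i) (hw i)).symm).eq

/-- If `(xᵢ)` is a column-bounded family and `(yᵢ)` a row-bounded family in a von
Neumann algebra `M` (i.e. the finite partial sums `Σ xᵢ*xᵢ` resp. `Σ yᵢyᵢ*` are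
uniformly bounded by `cx` resp. `cy`), then the family `(yᵢxᵢ)` is summable in the
weak* topology of `M` (encoded by convergence of all matrix coefficients of the net
of finite partial sums), with sum `z ∈ M` satisfying `‖z‖ ≤ cy^{1/2} · cx^{1/2}`. -/
theorem stmt_7 {H : Type*} [NormedAddCommGroup H] [InnerProductSpace ℂ H]
    [CompleteSpace H] (M : VonNeumannAlgebra H) {I : Type*}
    (x y : I → H →L[ℂ] H) (hxM : ∀ i, x i ∈ M) (hyM : ∀ i, y i ∈ M)
    (cx cy : ℝ)
    (hx : ∀ J : Finset I, ‖∑ i ∈ J, star (x i) * x i‖ ≤ cx)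
    (hy : ∀ J : Finset I, ‖∑ i ∈ J, y i * star (y i)‖ ≤ cy) :
    ∃ z : H →L[ℂ] H, z ∈ M ∧
      (∀ ξ η : H, HasSum (fun i => ⟪ξ, (y i * x i) η⟫_ℂ) ⟪ξ, z η⟫_ℂ) ∧
      ‖z‖ ≤ Real.sqrt cy * Real.sqrt cx := by
  obtain ⟨B, hBnorm, hB⟩ := exists_sesqForm_hasSum_inner_of_sum_norm_le (fun i => y i * x i)
    (by positivity) fun ξ η J => sum_norm_inner_mul_apply_le x y J (hx J) (hy J) ξ η
  obtain ⟨z, hznorm, hz⟩ := InnerProductSpace.exists_opNorm_le_inner_apply_eq B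
  have hzsum (ξ η : H) : HasSum (fun i => ⟪ξ, (y i * x i) η⟫_ℂ) ⟪ξ, z η⟫_ℂ := hz ξ η ▸ hB ξ η
  exact ⟨z, M.mem_of_hasSum_inner (fun i => mul_mem (hyM i) (hxM i)) hzsum, hzsum,
    hznorm.trans hBnorm⟩
end

section
/- Let H₁, H₂, H₃ be Hilbert spaces and let u : S²(H₂,H₃) × S²(H₁,H₂) → B(H₁,H₃) be a bounded bilinear map satisfying u(y, xR) = u(y,x)R for all x ∈ S²(H₁,H₂), y ∈ S²(H₂,H₃) and all R in the commutant M₁' of a von Neumann algebra M₁ ⊆ B(H₁). For ξ₂, η₂ ∈ H₂ and ξ₃, η₃ ∈ H₃, define U₁(ξ̄₂,η₂,ξ̄₃,η₃) ∈ B(H₁) by ⟨U₁(ξ̄₂,η₂,ξ̄₃,η₃)(η₁), ξ₁⟩ = ⟨u(ξ̄₂⊗η₃, ξ̄₁⊗η₂)(η₁), ξ₃⟩ for all ξ₁, η₁ ∈ H₁. Then every operator U₁(ξ̄₂,η₂,ξ̄₃,η₃) belongs to M₁. Conversely, if all such operators belong to M₁, then u(y, xR) = u(y,x)R for all x, y and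 R ∈ M₁'. -/
/-!
For fixed `ξ₂, η₂, ξ₃, η₃`, the coefficients `⟪ξ₃, u(ξ̄₂⊗η₃, ξ̄₁⊗η₂) η₁⟫` form a bounded
sesquilinear form in `(ξ₁, η₁)`, so they are the matrix coefficients of an operator `A`.
Since `(ξ̄₁⊗η₂) R = (R*ξ₁)‾⊗η₂`, the identity `u(y, xR) = u(y, x)R` for rank-one `x` and `y` says
exactly that `A` commutes with `R`, and by the bicommutant theorem `A ∈ M₁` iff `A` commutes with
`M₁'`. The identity for arbitrary Hilbert–Schmidt `x, y` follows from the rank-one case: the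
defect `u(y, xR) - u(y, x)R` is additive and bounded in the Hilbert–Schmidt norms (which satisfy
`‖xR‖₂ ≤ ‖x‖₂ ‖R‖`), and the truncations `x P_F` converge to `x` in Hilbert–Schmidt norm.
-/

open scoped InnerProductSpace ComplexConjugate
open ContinuousLinearMap MeasureTheory

noncomputable section

section HSdefs

variable {ι H K : Type*} [NormedAddCommGroup H] [InnerProductSpace ℂ H]
  [NormedAddCommGroup K] [InnerProductSpace ℂ K]

/-- Hilbert–Schmidt predicate w.r.t. a Hilbert basis. -/
def IsHS (b : HilbertBasis ι ℂ H) (T : H →L[ℂ] K) : Prop :=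
  Summable fun i => ‖T (b i)‖ ^ 2

/-- Hilbert–Schmidt norm w.r.t. a Hilbert basis. -/
def hsNorm (b : HilbertBasis ι ℂ H) (T : H →L[ℂ] K) : ℝ :=
  Real.sqrt (∑' i, ‖T (b i)‖ ^ 2)

/-- The absolute value `|T| = sqrt (T* T)`. -/
def absCLM [CompleteSpace H] [CompleteSpace K] (T : H →L[ℂ] K) : H →L[ℂ] H :=
  CFC.sqrt ((ContinuousLinearMap.adjoint T) ∘L T)

/-- Trace class predicate w.r.t. a Hilbert basis: `tr |T| < ∞`. -/
def IsTraceClass [CompleteSpace H] [CompleteSpace K]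
    (b : HilbertBasis ι ℂ H) (T : H →L[ℂ] K) : Prop :=
  Summable fun i => (⟪b i, absCLM T (b i)⟫_ℂ).re

/-- Trace norm `tr |T|` w.r.t. a Hilbert basis. -/
def traceNorm [CompleteSpace H] [CompleteSpace K]
    (b : HilbertBasis ι ℂ H) (T : H →L[ℂ] K) : ℝ :=
  ∑' i, (⟪b i, absCLM T (b i)⟫_ℂ).re

/-- Rank-one operator `ζ ↦ ⟪k, ζ⟫ • h` (i.e. `h ⊗ k̄` with inner products
linear in the first variable). -/
def rankOne (h : K) (k : H) : H →L[ℂ] K :=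
  (innerSL ℂ k).smulRight h

end HSdefs


open Filter Topology

section HilbertSchmidt

variable {ι H K : Type*} [NormedAddCommGroup H] [InnerProductSpace ℂ H]
  [NormedAddCommGroup K] [InnerProductSpace ℂ K]

lemma rankOne_eq_innerProductSpace_rankOne (h : K) (k : H) :
    rankOne h k = InnerProductSpace.rankOne ℂ h k := rfl

lemma rankOne_comp [CompleteSpace H] (h : K) (k : H) (R : H →L[ℂ] H) :
    rankOne h k ∘L R = rankOne h (adjoint R k) := by
  ext x
  simp [rankOne_eq_innerProductSpace_rankOne, adjoint_inner_left]

lemma HilbertBasis.hasSum_norm_inner_sq (b : HilbertBasis ι ℂ H) (v : H) :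
    HasSum (fun i => ‖⟪b i, v⟫_ℂ‖ ^ 2) (‖v‖ ^ 2) := by
  simpa [b.repr_apply_apply] using lp.hasSum_norm (p := 2) (by norm_num) (b.repr v)

lemma HilbertBasis.tsum_enorm_inner_sq (b : HilbertBasis ι ℂ H) (v : H) :
    ∑' i, ‖⟪b i, v⟫_ℂ‖ₑ ^ 2 = ‖v‖ₑ ^ 2 := by
  have h := b.hasSum_norm_inner_sq v
  rw [← ofReal_norm, ← ENNReal.ofReal_pow (norm_nonneg _), ← h.tsum_eq,
    ENNReal.ofReal_tsum_of_nonneg (fun _ => sq_nonneg _) h.summable]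
  simp [ENNReal.ofReal_pow, ofReal_norm]

lemma isHS_iff_tsum_enorm_sq_ne_top (b : HilbertBasis ι ℂ H) (T : H →L[ℂ] K) :
    IsHS b T ↔ ∑' i, ‖T (b i)‖ₑ ^ 2 ≠ ⊤ := by
  have h := ENNReal.tsum_coe_ne_top_iff_summable_coe (f := fun i => ‖T (b i)‖₊ ^ 2)
  push_cast at h
  exact h.symm

lemma hsNorm_eq_sqrt_toReal (b : HilbertBasis ι ℂ H) (T : H →L[ℂ] K) :
    hsNorm b T = √(∑' i, ‖T (b i)‖ₑ ^ 2).toReal := by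
  rw [hsNorm, ENNReal.tsum_toReal_eq fun _ => by finiteness]
  simp [ENNReal.toReal_pow]

lemma hsNorm_nonneg (b : HilbertBasis ι ℂ H) (T : H →L[ℂ] K) : 0 ≤ hsNorm b T :=
  Real.sqrt_nonneg _

lemma tsum_enorm_apply_sq_eq_adjoint [CompleteSpace H] [CompleteSpace K] {κ : Type*}
    (b : HilbertBasis ι ℂ H) (c : HilbertBasis κ ℂ K) (T : H →L[ℂ] K) :
    ∑' i, ‖T (b i)‖ₑ ^ 2 = ∑' j, ‖adjoint T (c j)‖ₑ ^ 2 := calc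
  ∑' i, ‖T (b i)‖ₑ ^ 2 = ∑' i, ∑' j, ‖⟪c j, T (b i)⟫_ℂ‖ₑ ^ 2 := by
    simp_rw [c.tsum_enorm_inner_sq]
  _ = ∑' j, ∑' i, ‖⟪b i, adjoint T (c j)⟫_ℂ‖ₑ ^ 2 := by
    rw [ENNReal.tsum_comm]
    refine tsum_congr fun j => tsum_congr fun i => ?_
    rw [← adjoint_inner_left, ← ofReal_norm, ← ofReal_norm, norm_inner_symm]
  _ = ∑' j, ‖adjoint T (c j)‖ₑ ^ 2 := by
    simp_rw [b.tsum_enorm_inner_sq]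

lemma tsum_enorm_comp_apply_sq_le [CompleteSpace H] [CompleteSpace K] (b : HilbertBasis ι ℂ H)
    (T : H →L[ℂ] K) (R : H →L[ℂ] H) :
    ∑' i, ‖(T ∘L R) (b i)‖ₑ ^ 2 ≤ ‖R‖ₑ ^ 2 * ∑' i, ‖T (b i)‖ₑ ^ 2 := by
  obtain ⟨_, c, -⟩ := exists_hilbertBasis ℂ K
  rw [tsum_enorm_apply_sq_eq_adjoint b c, tsum_enorm_apply_sq_eq_adjoint b c T,
    ← ENNReal.tsum_mul_left, adjoint_comp]
  refine ENNReal.tsum_le_tsum fun j => ?_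
  calc ‖adjoint R (adjoint T (c j))‖ₑ ^ 2 ≤ (‖adjoint R‖ₑ * ‖adjoint T (c j)‖ₑ) ^ 2 := by
        gcongr; exact le_opENorm _ _
    _ = ‖R‖ₑ ^ 2 * ‖adjoint T (c j)‖ₑ ^ 2 := by
        rw [LinearIsometryEquiv.enorm_map, mul_pow]

lemma IsHS.comp [CompleteSpace H] [CompleteSpace K] {b : HilbertBasis ι ℂ H} {T : H →L[ℂ] K}
    (hT : IsHS b T) (R : H →L[ℂ] H) : IsHS b (T ∘L R) := by
  rw [isHS_iff_tsum_enorm_sq_ne_top] at hT ⊢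
  exact ne_top_of_le_ne_top (by finiteness) (tsum_enorm_comp_apply_sq_le b T R)

lemma hsNorm_comp_le [CompleteSpace H] [CompleteSpace K] {b : HilbertBasis ι ℂ H}
    {T : H →L[ℂ] K} (hT : IsHS b T) (R : H →L[ℂ] H) :
    hsNorm b (T ∘L R) ≤ hsNorm b T * ‖R‖ := by
  rw [isHS_iff_tsum_enorm_sq_ne_top] at hT
  rw [hsNorm_eq_sqrt_toReal, hsNorm_eq_sqrt_toReal]
  calc √(∑' i, ‖(T ∘L R) (b i)‖ₑ ^ 2).toReal
      ≤ √(‖R‖ₑ ^ 2 * ∑' i, ‖T (b i)‖ₑ ^ 2).toReal := by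
        gcongr
        · finiteness
        · exact tsum_enorm_comp_apply_sq_le b T R
    _ = √(∑' i, ‖T (b i)‖ₑ ^ 2).toReal * ‖R‖ := by
        rw [ENNReal.toReal_mul, Real.sqrt_mul (by positivity), mul_comm]
        simp

lemma hasSum_norm_rankOne_apply_sq (b : HilbertBasis ι ℂ H) (h : K) (k : H) :
    HasSum (fun i => ‖rankOne h k (b i)‖ ^ 2) ((‖h‖ * ‖k‖) ^ 2) := by
  have h_apply : ∀ i, ‖rankOne h k (b i)‖ ^ 2 = ‖h‖ ^ 2 * ‖⟪b i, k⟫_ℂ‖ ^ 2 := fun i => by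
    rw [rankOne_eq_innerProductSpace_rankOne, InnerProductSpace.rankOne_apply, norm_smul,
      mul_pow, norm_inner_symm, mul_comm]
  simpa only [h_apply, mul_pow] using (b.hasSum_norm_inner_sq k).mul_left (‖h‖ ^ 2)

lemma isHS_rankOne (b : HilbertBasis ι ℂ H) (h : K) (k : H) : IsHS b (rankOne h k) :=
  (hasSum_norm_rankOne_apply_sq b h k).summable

lemma hsNorm_rankOne (b : HilbertBasis ι ℂ H) (h : K) (k : H) :
    hsNorm b (rankOne h k) = ‖h‖ * ‖k‖ := by
  rw [hsNorm, (hasSum_norm_rankOne_apply_sq b h k).tsum_eq, Real.sqrt_sq (by positivity)]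

end HilbertSchmidt

section Truncation

variable {ι H K : Type*} [NormedAddCommGroup H] [InnerProductSpace ℂ H]
  [NormedAddCommGroup K] [InnerProductSpace ℂ K]

/-- `x ∘ P_F`, where `P_F` is the orthogonal projection onto `span {b i | i ∈ F}`. -/
def truncate (b : HilbertBasis ι ℂ H) (x : H →L[ℂ] K) (F : Finset ι) : H →L[ℂ] K :=
  ∑ i ∈ F, rankOne (x (b i)) (b i)

lemma sub_truncate_apply (b : HilbertBasis ι ℂ H) (x : H →L[ℂ] K) (F : Finset ι) (k : ι) :
    (x - truncate b x F) (b k) = (↑F : Set ι)ᶜ.indicator (fun k => x (b k)) k := by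
  classical
  have h_inner := orthonormal_iff_ite.mp b.orthonormal
  by_cases hk : k ∈ F <;>
    simp [truncate, rankOne_eq_innerProductSpace_rankOne, h_inner, hk]

lemma IsHS.sub_truncate {b : HilbertBasis ι ℂ H} {x : H →L[ℂ] K} (hx : IsHS b x)
    (F : Finset ι) : IsHS b (x - truncate b x F) := by
  refine Summable.of_nonneg_of_le (fun _ => sq_nonneg _) (fun k => ?_) hx
  rw [sub_truncate_apply]
  gcongr
  exact norm_indicator_le_norm_self _ _

lemma tendsto_hsNorm_sub_truncate (b : HilbertBasis ι ℂ H) (x : H →L[ℂ] K) :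
    Tendsto (fun F => hsNorm b (x - truncate b x F)) atTop (𝓝 0) := by
  have h_sq : ∀ F k, ‖(x - truncate b x F) (b k)‖ ^ 2
      = (↑F : Set ι)ᶜ.indicator (fun k => ‖x (b k)‖ ^ 2) k := by
    intro F k
    rw [sub_truncate_apply]
    by_cases hk : k ∈ F <;> simp [hk]
  simp_rw [hsNorm, h_sq, ← tsum_subtype]
  have h := (Real.continuous_sqrt.tendsto 0).comp
    (tendsto_tsum_compl_atTop_zero fun k => ‖x (b k)‖ ^ 2)
  rwa [Real.sqrt_zero] at h

theorem eq_zero_of_map_rankOne_eq_zero {E : Type*} [NormedAddCommGroup E]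
    {b : HilbertBasis ι ℂ H} (f : (H →L[ℂ] K) →+ E) {M : ℝ}
    (hf : ∀ x, IsHS b x → ‖f x‖ ≤ M * hsNorm b x) (hf_rankOne : ∀ h k, f (rankOne h k) = 0)
    {x : H →L[ℂ] K} (hx : IsHS b x) : f x = 0 := by
  have h_le : ∀ F, ‖f x‖ ≤ M * hsNorm b (x - truncate b x F) := fun F => by
    have h_trunc : f (truncate b x F) = 0 := by simp [truncate, hf_rankOne]
    simpa [h_trunc] using hf _ (hx.sub_truncate F)
  simpa using ge_of_tendsto' ((tendsto_hsNorm_sub_truncate b x).const_mul M) h_le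

end Truncation

lemma mul_eq_mul_iff_of_inner_eq {H K : Type*} [NormedAddCommGroup H] [InnerProductSpace ℂ H]
    [CompleteSpace H] [NormedAddCommGroup K] [InnerProductSpace ℂ K]
    {A : H →L[ℂ] H} {T : H → H →L[ℂ] K} {ξ₃ : K} (hA : ∀ ξ η, ⟪ξ, A η⟫_ℂ = ⟪ξ₃, T ξ η⟫_ℂ)
    (R : H →L[ℂ] H) :
    R * A = A * R ↔ ∀ ξ η, ⟪ξ₃, T (adjoint R ξ) η⟫_ℂ = ⟪ξ₃, T ξ (R η)⟫_ℂ := by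
  simp only [ContinuousLinearMap.ext_iff, ext_iff_inner_left ℂ (E := H),
    mul_apply_eq_comp, ← adjoint_inner_left R, hA]
  exact forall_comm

section Bilinear

variable {ι₁ ι₂ H₁ H₂ H₃ : Type*}
  [NormedAddCommGroup H₁] [InnerProductSpace ℂ H₁]
  [NormedAddCommGroup H₂] [InnerProductSpace ℂ H₂]
  [NormedAddCommGroup H₃] [InnerProductSpace ℂ H₃]
  {b₁ : HilbertBasis ι₁ ℂ H₁} {b₂ : HilbertBasis ι₂ ℂ H₂}
  (u : (H₂ →L[ℂ] H₃) →ₗ[ℂ] (H₁ →L[ℂ] H₂) →ₗ[ℂ] (H₁ →L[ℂ] H₃)) {C : ℝ}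

lemma exists_inner_apply_eq_inner_rankOne [CompleteSpace H₁] [CompleteSpace H₃]
    (hu : ∀ y x, IsHS b₂ y → IsHS b₁ x → ‖u y x‖ ≤ C * hsNorm b₂ y * hsNorm b₁ x)
    {y : H₂ →L[ℂ] H₃} (hy : IsHS b₂ y) (η₂ : H₂) (ξ₃ : H₃) :
    ∃ A : H₁ →L[ℂ] H₁, ∀ ξ₁ η₁, ⟪ξ₁, A η₁⟫_ℂ = ⟪ξ₃, u y (rankOne η₂ ξ₁) η₁⟫_ℂ := by
  let L : H₁ →ₗ[ℂ] H₁ :=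
    { toFun := fun ξ₁ => adjoint (u y (rankOne η₂ ξ₁)) ξ₃
      map_add' := fun _ _ => by simp [rankOne_eq_innerProductSpace_rankOne]
      map_smul' := fun _ _ => by simp [rankOne_eq_innerProductSpace_rankOne, map_smulₛₗ] }
  have hL : ∀ ξ₁, ‖L ξ₁‖ ≤ C * hsNorm b₂ y * ‖η₂‖ * ‖ξ₃‖ * ‖ξ₁‖ := fun ξ₁ => calc
    ‖L ξ₁‖ ≤ ‖u y (rankOne η₂ ξ₁)‖ * ‖ξ₃‖ :=
      ((adjoint (u y (rankOne η₂ ξ₁))).le_opNorm ξ₃).trans_eq (by rw [LinearIsometryEquiv.norm_map])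
    _ ≤ C * hsNorm b₂ y * (‖η₂‖ * ‖ξ₁‖) * ‖ξ₃‖ := by
      gcongr
      simpa [hsNorm_rankOne] using hu _ _ hy (isHS_rankOne b₁ η₂ ξ₁)
    _ = C * hsNorm b₂ y * ‖η₂‖ * ‖ξ₃‖ * ‖ξ₁‖ := by ring
  refine ⟨adjoint (L.mkContinuous _ hL), fun ξ₁ η₁ => ?_⟩
  rw [adjoint_inner_right, LinearMap.mkContinuous_apply]
  exact adjoint_inner_left (u y (rankOne η₂ ξ₁)) η₁ ξ₃

lemma norm_apply_comp_sub_comp_le [CompleteSpace H₁] [CompleteSpace H₂] (hC : 0 ≤ C)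
    (hu : ∀ y x, IsHS b₂ y → IsHS b₁ x → ‖u y x‖ ≤ C * hsNorm b₂ y * hsNorm b₁ x)
    (R : H₁ →L[ℂ] H₁) {y : H₂ →L[ℂ] H₃} {x : H₁ →L[ℂ] H₂} (hy : IsHS b₂ y) (hx : IsHS b₁ x) :
    ‖u y (x ∘L R) - u y x ∘L R‖ ≤ 2 * C * ‖R‖ * hsNorm b₂ y * hsNorm b₁ x := by
  have hCy : 0 ≤ C * hsNorm b₂ y := mul_nonneg hC (hsNorm_nonneg _ _)
  calc ‖u y (x ∘L R) - u y x ∘L R‖ ≤ ‖u y (x ∘L R)‖ + ‖u y x‖ * ‖R‖ :=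
        (norm_sub_le _ _).trans (by gcongr; exact opNorm_comp_le _ _)
    _ ≤ C * hsNorm b₂ y * (hsNorm b₁ x * ‖R‖) + C * hsNorm b₂ y * hsNorm b₁ x * ‖R‖ := by
        gcongr
        · exact (hu _ _ hy (hx.comp R)).trans (by gcongr; exact hsNorm_comp_le hx R)
        · exact hu _ _ hy hx
    _ = 2 * C * ‖R‖ * hsNorm b₂ y * hsNorm b₁ x := by ring

theorem apply_comp_eq_comp_of_rankOne [CompleteSpace H₁] [CompleteSpace H₂] (hC : 0 ≤ C)
    (hu : ∀ y x, IsHS b₂ y → IsHS b₁ x → ‖u y x‖ ≤ C * hsNorm b₂ y * hsNorm b₁ x)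
    (R : H₁ →L[ℂ] H₁)
    (hR : ∀ (η₃ : H₃) (ξ₂ η₂ : H₂) (ξ₁ : H₁),
      u (rankOne η₃ ξ₂) (rankOne η₂ ξ₁ ∘L R) = u (rankOne η₃ ξ₂) (rankOne η₂ ξ₁) ∘L R)
    {y : H₂ →L[ℂ] H₃} {x : H₁ →L[ℂ] H₂} (hy : IsHS b₂ y) (hx : IsHS b₁ x) :
    u y (x ∘L R) = u y x ∘L R := by
  let D : (H₂ →L[ℂ] H₃) →ₗ[ℂ] (H₁ →L[ℂ] H₂) →ₗ[ℂ] (H₁ →L[ℂ] H₃) :=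
    u.compl₂ (precomp H₂ R).toLinearMap - u.compr₂ (precomp H₃ R).toLinearMap
  have hD : ∀ y x, D y x = u y (x ∘L R) - u y x ∘L R := fun _ _ => rfl
  have hD_rankOne : ∀ η₂ ξ₁ y, IsHS b₂ y → D y (rankOne η₂ ξ₁) = 0 := fun η₂ ξ₁ y hy =>
    eq_zero_of_map_rankOne_eq_zero (D.flip (rankOne η₂ ξ₁)).toAddMonoidHom
      (M := 2 * C * ‖R‖ * hsNorm b₁ (rankOne η₂ ξ₁))
      (fun y hy => by
        simpa [hD, mul_right_comm _ (hsNorm b₂ y)] using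
          norm_apply_comp_sub_comp_le u hC hu R hy (isHS_rankOne b₁ η₂ ξ₁))
      (fun η₃ ξ₂ => by simp [hD, hR]) hy
  rw [← sub_eq_zero, ← hD]
  exact eq_zero_of_map_rankOne_eq_zero (D y).toAddMonoidHom
    (fun x hx => by simpa [hD] using norm_apply_comp_sub_comp_le u hC hu R hy hx)
    (fun η₂ ξ₁ => hD_rankOne η₂ ξ₁ y hy) hx

end Bilinear

/-- Let `u` be a bounded bilinear map on Hilbert–Schmidt operators (bilinearity and
the bound `‖u(y,x)‖ ≤ C‖y‖₂‖x‖₂` are hypotheses).  Then `u(y, xR) = u(y,x)R` for all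
Hilbert–Schmidt `x, y` and all `R ∈ M₁'` if and only if, for all `ξ₂, η₂, ξ₃, η₃`,
the operator `U₁(ξ̄₂,η₂,ξ̄₃,η₃)` determined by the matrix coefficients
`⟨U₁ η₁, ξ₁⟩ = ⟨u(ξ̄₂⊗η₃, ξ̄₁⊗η₂)(η₁), ξ₃⟩` belongs to `M₁`. -/
theorem stmt_10 {ι₁ ι₂ H₁ H₂ H₃ : Type*}
    [NormedAddCommGroup H₁] [InnerProductSpace ℂ H₁] [CompleteSpace H₁]
    [NormedAddCommGroup H₂] [InnerProductSpace ℂ H₂] [CompleteSpace H₂]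
    [NormedAddCommGroup H₃] [InnerProductSpace ℂ H₃] [CompleteSpace H₃]
    (M₁ : VonNeumannAlgebra H₁)
    (b₁ : HilbertBasis ι₁ ℂ H₁) (b₂ : HilbertBasis ι₂ ℂ H₂)
    (u : (H₂ →L[ℂ] H₃) → (H₁ →L[ℂ] H₂) → (H₁ →L[ℂ] H₃)) (C : ℝ)
    (hadd₁ : ∀ y x x', u y (x + x') = u y x + u y x')
    (hadd₂ : ∀ y y' x, u (y + y') x = u y x + u y' x)
    (hsmul₁ : ∀ (z : ℂ) y x, u y (z • x) = z • u y x)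
    (hsmul₂ : ∀ (z : ℂ) y x, u (z • y) x = z • u y x)
    (hbdd : ∀ y x, IsHS b₂ y → IsHS b₁ x → ‖u y x‖ ≤ C * hsNorm b₂ y * hsNorm b₁ x) :
    (∀ (y : H₂ →L[ℂ] H₃) (x : H₁ →L[ℂ] H₂), IsHS b₂ y → IsHS b₁ x →
        ∀ R : H₁ →L[ℂ] H₁, R ∈ M₁.commutant → u y (x ∘L R) = u y x ∘L R)
      ↔ ∀ (ξ₂ η₂ : H₂) (ξ₃ η₃ : H₃), ∃ A ∈ M₁, ∀ ξ₁ η₁ : H₁,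
          ⟪ξ₁, A η₁⟫_ℂ = ⟪ξ₃, u (rankOne η₃ ξ₂) (rankOne η₂ ξ₁) η₁⟫_ℂ := by
  let uₗ : (H₂ →L[ℂ] H₃) →ₗ[ℂ] (H₁ →L[ℂ] H₂) →ₗ[ℂ] (H₁ →L[ℂ] H₃) :=
    LinearMap.mk₂ ℂ u hadd₂ hsmul₂ hadd₁ hsmul₁
  have huₗ : ∀ y x, IsHS b₂ y → IsHS b₁ x → ‖uₗ y x‖ ≤ max C 0 * hsNorm b₂ y * hsNorm b₁ x :=
    fun y x hy hx => (hbdd y x hy hx).trans <| by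
      gcongr
      exacts [hsNorm_nonneg _ _, hsNorm_nonneg _ _, le_max_left _ _]
  constructor
  · intro hcomm ξ₂ η₂ ξ₃ η₃
    obtain ⟨A, hA⟩ := exists_inner_apply_eq_inner_rankOne uₗ hbdd (isHS_rankOne b₂ η₃ ξ₂) η₂ ξ₃
    refine ⟨A, ?_, hA⟩
    rw [← M₁.commutant_commutant, VonNeumannAlgebra.mem_commutant_iff]
    refine fun R hR => (mul_eq_mul_iff_of_inner_eq hA R).mpr fun ξ₁ η₁ => ?_
    have h := hcomm _ _ (isHS_rankOne b₂ η₃ ξ₂) (isHS_rankOne b₁ η₂ ξ₁) R hR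
    simpa [uₗ, ← rankOne_comp] using congr(⟪ξ₃, $h η₁⟫_ℂ)
  · intro hU y x hy hx R hR
    refine apply_comp_eq_comp_of_rankOne uₗ (le_max_right C 0) huₗ R (fun η₃ ξ₂ η₂ ξ₁ => ?_) hy hx
    ext η₁
    refine ext_inner_left ℂ fun ξ₃ => ?_
    obtain ⟨A, hAM, hA⟩ := hU ξ₂ η₂ ξ₃ η₃
    have hAR := (VonNeumannAlgebra.mem_commutant_iff.mp hR A hAM).symm
    simpa [uₗ, rankOne_comp] using (mul_eq_mul_iff_of_inner_eq hA R).mp hAR ξ₁ η₁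
end
end

section
/- Let M be a von Neumann algebra and I an index set. Let X be the set of families s = (s_i)_{i∈I} with s_i ∈ M such that the partial sums Σ_{i∈J} s_i* s_i (J ⊆ I finite) are uniformly bounded. Then for s, t ∈ X, the family (s_i* t_i)_{i∈I} is summable in the weak* topology of M, and setting ⟨s,t⟩ = Σ_{i∈I} s_i* t_i endows X with the structure of a Hilbert M-module (with componentwise right action (s_i)·m = (s_i m)): the inner product is positive, definite, hermitian, M-linear in the second variable, and X is complete for the norm ‖s‖ = ‖⟨s,s⟩‖^{1/2}. -/
/-!
A family `s = (sᵢ)` with uniformly bounded partial sums `∑ sᵢ* sᵢ` is the same thing as a bounded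
column operator `Vₛ : H → ℓ²(I, H)`, `ξ ↦ (sᵢ ξ)ᵢ`, and then `⟨s, t⟩ = Vₛ* Vₜ`. The matrix
coefficients `⟪ξ, Vₛ* Vₜ η⟫ = ∑ ⟪sᵢ ξ, tᵢ η⟫` give weak* summability; positivity, hermitian
symmetry and `M`-linearity are those of `(V, W) ↦ V* W`; and `‖⟨s, s⟩‖^{1/2} = ‖Vₛ‖` identifies
`X` isometrically with a closed part of the Banach space `B(H, ℓ²(I, H))`, which gives
completeness. Weak sums and norm limits of elements of `M` commute with `M'`, so they stay in
`M = M''`.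
-/

open scoped InnerProductSpace
open Filter Topology

section Normed

variable {𝕜 E F I : Type*} [RCLike 𝕜] [NormedAddCommGroup E] [NormedSpace 𝕜 E]
  [NormedAddCommGroup F] [NormedSpace 𝕜 F]

def IsBoundedColumn (s : I → E →L[𝕜] F) : Prop :=
  ∃ V : E →L[𝕜] lp (fun _ : I => F) 2, ∀ ξ i, V ξ i = s i ξ

open Classical in
noncomputable def columnOp (s : I → E →L[𝕜] F) : E →L[𝕜] lp (fun _ : I => F) 2 :=
  if h : IsBoundedColumn s then h.choose else 0

theorem columnOp_apply {s : I → E →L[𝕜] F} (hs : IsBoundedColumn s) (ξ : E) (i : I) :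
    columnOp s ξ i = s i ξ := by
  rw [columnOp, dif_pos hs]
  exact hs.choose_spec ξ i

theorem columnOp_eq {s : I → E →L[𝕜] F} {V : E →L[𝕜] lp (fun _ : I => F) 2}
    (hV : ∀ ξ i, V ξ i = s i ξ) : columnOp s = V := by
  ext ξ i
  rw [columnOp_apply ⟨V, hV⟩, hV]

theorem IsBoundedColumn.add {s t : I → E →L[𝕜] F} (hs : IsBoundedColumn s)
    (ht : IsBoundedColumn t) : IsBoundedColumn (s + t) :=
  ⟨columnOp s + columnOp t, fun ξ i => by simp [columnOp_apply hs, columnOp_apply ht]⟩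

theorem IsBoundedColumn.comp {t : I → E →L[𝕜] F} (ht : IsBoundedColumn t) (m : E →L[𝕜] E) :
    IsBoundedColumn fun i => t i ∘L m :=
  ⟨columnOp t ∘L m, fun ξ i => by simp [columnOp_apply ht]⟩

theorem columnOp_add {s t : I → E →L[𝕜] F} (hs : IsBoundedColumn s)
    (ht : IsBoundedColumn t) : columnOp (s + t) = columnOp s + columnOp t :=
  columnOp_eq fun ξ i => by simp [columnOp_apply hs, columnOp_apply ht]

theorem columnOp_sub {s t : I → E →L[𝕜] F} (hs : IsBoundedColumn s)
    (ht : IsBoundedColumn t) : columnOp (s - t) = columnOp s - columnOp t :=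
  columnOp_eq fun ξ i => by simp [columnOp_apply hs, columnOp_apply ht]

theorem columnOp_comp {t : I → E →L[𝕜] F} (ht : IsBoundedColumn t) (m : E →L[𝕜] E) :
    columnOp (fun i => t i ∘L m) = columnOp t ∘L m :=
  columnOp_eq fun ξ i => by simp [columnOp_apply ht]

theorem isBoundedColumn_of_sum_norm_sq_le {s : I → E →L[𝕜] F} {C : ℝ} (hC : 0 ≤ C)
    (h : ∀ ξ (J : Finset I), ∑ i ∈ J, ‖s i ξ‖ ^ 2 ≤ C ^ 2 * ‖ξ‖ ^ 2) :
    IsBoundedColumn s := by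
  have hmem : ∀ ξ, Memℓp (fun i => s i ξ) 2 := fun ξ =>
    memℓp_gen <| summable_of_sum_le (c := (C * ‖ξ‖) ^ 2) (fun _ => by positivity) fun J => by
      simpa only [ENNReal.toReal_ofNat, Real.rpow_two, mul_pow] using h ξ J
  let V : E →ₗ[𝕜] lp (fun _ : I => F) 2 :=
    { toFun := fun ξ => ⟨fun i => s i ξ, hmem ξ⟩
      map_add' := fun ξ η => lp.ext <| funext fun i => map_add (s i) ξ η
      map_smul' := fun c ξ => lp.ext <| funext fun i => map_smul (s i) c ξ }
  refine ⟨V.mkContinuous C fun ξ => ?_, fun ξ i => rfl⟩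
  refine lp.norm_le_of_forall_sum_le (by norm_num) (by positivity) fun J => ?_
  simp only [ENNReal.toReal_ofNat, Real.rpow_two, mul_pow]
  exact h ξ J

noncomputable def columnFamily (V : E →L[𝕜] lp (fun _ : I => F) 2) : I → E →L[𝕜] F :=
  fun i => lp.evalCLM 𝕜 (fun _ : I => F) 2 i ∘L V

theorem isBoundedColumn_columnFamily (V : E →L[𝕜] lp (fun _ : I => F) 2) :
    IsBoundedColumn (columnFamily V) :=
  ⟨V, fun _ _ => rfl⟩

theorem columnOp_columnFamily (V : E →L[𝕜] lp (fun _ : I => F) 2) :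
    columnOp (columnFamily V) = V :=
  columnOp_eq fun _ _ => rfl

theorem columnFamily_columnOp {s : I → E →L[𝕜] F} (hs : IsBoundedColumn s) :
    columnFamily (columnOp s) = s :=
  funext fun i => ContinuousLinearMap.ext fun ξ => columnOp_apply hs ξ i

theorem exists_tendsto_columnOp_of_cauchySeq [CompleteSpace F] {u : ℕ → I → E →L[𝕜] F}
    (hu : ∀ n, IsBoundedColumn (u n)) (hcauchy : CauchySeq fun n => columnOp (u n)) :
    ∃ s, IsBoundedColumn s ∧ (∀ i, Tendsto (fun n => u n i) atTop (𝓝 (s i))) ∧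
      Tendsto (fun n => columnOp (u n)) atTop (𝓝 (columnOp s)) := by
  obtain ⟨V, hV⟩ := cauchySeq_tendsto_of_complete hcauchy
  refine ⟨columnFamily V, isBoundedColumn_columnFamily V, fun i => ?_, ?_⟩
  · have hcont := ContinuousLinearMap.continuous
      (ContinuousLinearMap.compL 𝕜 E _ F (lp.evalCLM 𝕜 (fun _ : I => F) 2 i))
    exact ((hcont.tendsto V).comp hV).congr fun n =>
      congrFun (columnFamily_columnOp (hu n)) i
  · rwa [columnOp_columnFamily]

end Normed

section InnerProduct

open ContinuousLinearMap
open scoped InnerProduct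

variable {𝕜 E F I : Type*} [RCLike 𝕜] [NormedAddCommGroup E] [InnerProductSpace 𝕜 E]
  [CompleteSpace E] [NormedAddCommGroup F] [InnerProductSpace 𝕜 F]

theorem re_inner_sum_star_mul_self_apply (s : I → E →L[𝕜] E) (J : Finset I) (ξ : E) :
    RCLike.re ⟪(∑ i ∈ J, star (s i) * s i) ξ, ξ⟫_𝕜 = ∑ i ∈ J, ‖s i ξ‖ ^ 2 := by
  simp [sum_apply, sum_inner, star_eq_adjoint, adjoint_inner_left]

theorem isBoundedColumn_iff_exists_norm_sum_le {s : I → E →L[𝕜] E} :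
    IsBoundedColumn s ↔ ∃ c : ℝ, ∀ J : Finset I, ‖∑ i ∈ J, star (s i) * s i‖ ≤ c := by
  constructor
  · rintro ⟨V, hV⟩
    refine ⟨‖V‖ ^ 2, fun J => ?_⟩
    have hsymm : (∑ i ∈ J, star (s i) * s i).IsSymmetric :=
      (isSelfAdjoint_sum J fun i _ => IsSelfAdjoint.star_mul_self (s i)).isSymmetric
    rw [norm_eq_iSup_rayleighQuotient _ hsymm]
    refine ciSup_le fun ξ => ?_
    rw [rayleighQuotient, reApplyInnerSelf_apply, re_inner_sum_star_mul_self_apply,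
      abs_of_nonneg (by positivity)]
    refine div_le_of_le_mul₀ (by positivity) (by positivity) ?_
    calc ∑ i ∈ J, ‖s i ξ‖ ^ 2 = ∑ i ∈ J, ‖V ξ i‖ ^ 2 := by simp only [hV]
      _ ≤ ‖V ξ‖ ^ 2 := by
        simpa only [ENNReal.toReal_ofNat, Real.rpow_two] using
          lp.sum_rpow_le_norm_rpow (by norm_num) (V ξ) J
      _ ≤ ‖V‖ ^ 2 * ‖ξ‖ ^ 2 := by rw [← mul_pow]; gcongr; exact V.le_opNorm ξ
  · rintro ⟨c, hc⟩
    have hc0 : 0 ≤ c := (norm_nonneg _).trans (hc ∅)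
    refine isBoundedColumn_of_sum_norm_sq_le (Real.sqrt_nonneg c) fun ξ J => ?_
    rw [Real.sq_sqrt hc0, ← re_inner_sum_star_mul_self_apply]
    calc _ ≤ ‖(∑ i ∈ J, star (s i) * s i) ξ‖ * ‖ξ‖ := re_inner_le_norm _ _
      _ ≤ c * ‖ξ‖ * ‖ξ‖ := by gcongr; exact le_of_opNorm_le _ (hc J) ξ
      _ = c * ‖ξ‖ ^ 2 := by ring

variable [CompleteSpace F]

noncomputable def columnInner (s t : I → E →L[𝕜] F) : E →L[𝕜] E :=
  (columnOp s)† ∘L columnOp t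

theorem hasSum_inner_columnInner {s t : I → E →L[𝕜] F} (hs : IsBoundedColumn s)
    (ht : IsBoundedColumn t) (ξ η : E) :
    HasSum (fun i => ⟪s i ξ, t i η⟫_𝕜) ⟪ξ, columnInner s t η⟫_𝕜 := by
  rw [columnInner, comp_apply, adjoint_inner_right]
  simpa only [columnOp_apply hs, columnOp_apply ht] using
    lp.hasSum_inner (columnOp s ξ) (columnOp t η)

theorem hasSum_inner_star_mul_apply {s t : I → E →L[𝕜] E} (hs : IsBoundedColumn s)
    (ht : IsBoundedColumn t) (ξ η : E) :
    HasSum (fun i => ⟪ξ, (star (s i) * t i) η⟫_𝕜) ⟪ξ, columnInner s t η⟫_𝕜 := by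
  simpa only [mul_def, comp_apply, star_eq_adjoint, adjoint_inner_right] using
    hasSum_inner_columnInner hs ht ξ η

theorem isPositive_columnInner_self (s : I → E →L[𝕜] F) : (columnInner s s).IsPositive :=
  isPositive_adjoint_comp_self (columnOp s)

theorem adjoint_columnInner (s t : I → E →L[𝕜] F) :
    (columnInner s t)† = columnInner t s := by
  rw [columnInner, columnInner, adjoint_comp, adjoint_adjoint]

theorem columnInner_add_right (s : I → E →L[𝕜] F) {t t' : I → E →L[𝕜] F}
    (ht : IsBoundedColumn t) (ht' : IsBoundedColumn t') :
    columnInner s (t + t') = columnInner s t + columnInner s t' := by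
  rw [columnInner, columnOp_add ht ht', comp_add]
  rfl

theorem columnInner_comp_right (s : I → E →L[𝕜] F) {t : I → E →L[𝕜] F}
    (ht : IsBoundedColumn t) (m : E →L[𝕜] E) :
    columnInner s (fun i => t i ∘L m) = columnInner s t ∘L m := by
  rw [columnInner, columnOp_comp ht]
  rfl

theorem sqrt_norm_columnInner_self (s : I → E →L[𝕜] F) :
    Real.sqrt ‖columnInner s s‖ = ‖columnOp s‖ := by
  rw [columnInner, norm_adjoint_comp_self, Real.sqrt_mul_self (norm_nonneg _)]

theorem sqrt_norm_columnInner_sub {s t : I → E →L[𝕜] F} (hs : IsBoundedColumn s)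
    (ht : IsBoundedColumn t) :
    Real.sqrt ‖columnInner (s - t) (s - t)‖ = dist (columnOp s) (columnOp t) := by
  rw [sqrt_norm_columnInner_self, columnOp_sub hs ht, dist_eq_norm]

theorem exists_tendsto_sqrt_norm_columnInner_sub {u : ℕ → I → E →L[𝕜] F}
    (hu : ∀ n, IsBoundedColumn (u n))
    (hcauchy : ∀ ε > (0 : ℝ), ∃ N, ∀ p ≥ N, ∀ q ≥ N,
      Real.sqrt ‖columnInner (u p - u q) (u p - u q)‖ < ε) :
    ∃ s, IsBoundedColumn s ∧ (∀ i, Tendsto (fun n => u n i) atTop (𝓝 (s i))) ∧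
      Tendsto (fun n => Real.sqrt ‖columnInner (u n - s) (u n - s)‖) atTop (𝓝 0) := by
  obtain ⟨s, hs, hlim, hcol⟩ := exists_tendsto_columnOp_of_cauchySeq hu <|
    Metric.cauchySeq_iff.mpr <| by
      simpa only [sqrt_norm_columnInner_sub (hu _) (hu _)] using hcauchy
  refine ⟨s, hs, hlim, ?_⟩
  simpa only [sqrt_norm_columnInner_sub (hu _) hs] using tendsto_iff_dist_tendsto_zero.mp hcol

theorem eq_zero_of_columnInner_self_eq_zero {s : I → E →L[𝕜] F} (hs : IsBoundedColumn s)
    (h : columnInner s s = 0) : s = 0 := by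
  have hV : ‖columnOp s‖ * ‖columnOp s‖ = 0 := by
    rw [← norm_adjoint_comp_self]
    exact norm_eq_zero.mpr h
  replace hV := norm_eq_zero.mp (mul_self_eq_zero.mp hV)
  ext i ξ
  simpa [columnOp_apply hs] using congrArg (fun V => V ξ i) hV

end InnerProduct

namespace VonNeumannAlgebra

open ContinuousLinearMap

variable {H : Type*} [NormedAddCommGroup H] [InnerProductSpace ℂ H] [CompleteSpace H]

theorem isClosed (M : VonNeumannAlgebra H) : IsClosed (M : Set (H →L[ℂ] H)) := by
  rw [← M.centralizer_centralizer]
  exact Set.isClosed_centralizer _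

theorem mem_of_hasSum_inner_s15 (M : VonNeumannAlgebra H) {I : Type*} {a : I → H →L[ℂ] H}
    (ha : ∀ i, a i ∈ M) {T : H →L[ℂ] H}
    (hT : ∀ ξ η, HasSum (fun i => ⟪ξ, a i η⟫_ℂ) ⟪ξ, T η⟫_ℂ) : T ∈ M := by
  rw [← M.commutant_commutant, mem_commutant_iff]
  intro g hg
  rw [mem_commutant_iff] at hg
  ext η
  refine ext_inner_left ℂ fun ξ => ?_
  have hgT := hT (adjoint g ξ) η
  simp only [adjoint_inner_left] at hgT
  have hcomm (i : I) : a i (g η) = g (a i η) := DFunLike.congr_fun (hg (a i) (ha i)) η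
  have hTg := hT ξ (g η)
  simp only [hcomm] at hTg
  exact hgT.unique hTg

end VonNeumannAlgebra

/-- The ultraweak column space `C_I^w(M)`: the set `X` of families `(sᵢ)` in a von
Neumann algebra `M` with uniformly bounded partial sums `Σ sᵢ*sᵢ` carries a Hilbert
`M`-module structure: for `s, t ∈ X` the family `(sᵢ*tᵢ)` is summable in the weak*
topology (encoded by matrix coefficients) with sum `⟨s,t⟩ ∈ M`; the inner product is
positive, definite, hermitian, additive and `M`-linear in the second variable; `X` is
closed under addition and the right `M`-action; and `X` is complete for the norm
`‖s‖ = ‖⟨s,s⟩‖^{1/2}`. -/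
theorem stmt_15 {H : Type*} [NormedAddCommGroup H] [InnerProductSpace ℂ H]
    [CompleteSpace H] (M : VonNeumannAlgebra H) {I : Type*}
    (X : Set (I → H →L[ℂ] H))
    (hX : X = {s | (∀ i, s i ∈ M) ∧
      ∃ c : ℝ, ∀ J : Finset I, ‖∑ i ∈ J, star (s i) * s i‖ ≤ c}) :
    ∃ ip : (I → H →L[ℂ] H) → (I → H →L[ℂ] H) → (H →L[ℂ] H),
      -- weak* summability of `(sᵢ* tᵢ)` with sum `ip s t`
      (∀ s ∈ X, ∀ t ∈ X, ∀ ξ η : H,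
        HasSum (fun i => ⟪ξ, ((star (s i)) * t i) η⟫_ℂ) ⟪ξ, ip s t η⟫_ℂ) ∧
      (∀ s ∈ X, ∀ t ∈ X, ip s t ∈ M) ∧
      -- positivity and definiteness
      (∀ s ∈ X, (ip s s).IsPositive) ∧
      (∀ s ∈ X, ip s s = 0 → s = 0) ∧
      -- hermitian symmetry
      (∀ s ∈ X, ∀ t ∈ X, ip s t = star (ip t s)) ∧
      -- additivity and `M`-linearity in the second variable
      (∀ s ∈ X, ∀ t ∈ X, ∀ t' ∈ X, ip s (t + t') = ip s t + ip s t') ∧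
      (∀ s ∈ X, ∀ t ∈ X, ∀ m ∈ M, ip s (fun i => t i * m) = ip s t * m) ∧
      -- `X` is a right `M`-module
      (∀ s ∈ X, ∀ t ∈ X, s + t ∈ X) ∧
      (∀ s ∈ X, ∀ m ∈ M, (fun i => s i * m) ∈ X) ∧
      -- completeness for the norm `‖s‖ = ‖⟨s,s⟩‖^{1/2}`
      (∀ u : ℕ → (I → H →L[ℂ] H), (∀ n, u n ∈ X) →
        (∀ ε > (0:ℝ), ∃ N, ∀ p ≥ N, ∀ q ≥ N,
          Real.sqrt ‖ip (u p - u q) (u p - u q)‖ < ε) →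
        ∃ s ∈ X, Filter.Tendsto (fun n => Real.sqrt ‖ip (u n - s) (u n - s)‖)
          Filter.atTop (nhds 0)) := by
  obtain rfl : X = {s | (∀ i, s i ∈ M) ∧ IsBoundedColumn s} := by
    simp only [hX, isBoundedColumn_iff_exists_norm_sum_le]
  refine ⟨columnInner, ?_, ?_, fun s _ => isPositive_columnInner_self s, ?_, ?_, ?_, ?_, ?_, ?_,
    ?_⟩
  · rintro s ⟨-, hs⟩ t ⟨-, ht⟩
    exact hasSum_inner_star_mul_apply hs ht
  · rintro s ⟨hsM, hs⟩ t ⟨htM, ht⟩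
    exact M.mem_of_hasSum_inner_s15 (fun i => mul_mem (star_mem (hsM i)) (htM i))
      (hasSum_inner_star_mul_apply hs ht)
  · rintro s ⟨-, hs⟩
    exact eq_zero_of_columnInner_self_eq_zero hs
  · intro s _ t _
    rw [ContinuousLinearMap.star_eq_adjoint, adjoint_columnInner]
  · rintro s - t ⟨-, ht⟩ t' ⟨-, ht'⟩
    exact columnInner_add_right s ht ht'
  · rintro s - t ⟨-, ht⟩ m -
    exact columnInner_comp_right s ht m
  · rintro s ⟨hsM, hs⟩ t ⟨htM, ht⟩
    exact ⟨fun i => add_mem (hsM i) (htM i), hs.add ht⟩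
  · rintro s ⟨hsM, hs⟩ m hm
    exact ⟨fun i => mul_mem (hsM i) hm, hs.comp m⟩
  · intro u hu hcauchy
    obtain ⟨s, hs, hlim, hconv⟩ :=
      exists_tendsto_sqrt_norm_columnInner_sub (fun n => (hu n).2) hcauchy
    exact ⟨s, ⟨fun i => M.isClosed.mem_of_tendsto (hlim i) (.of_forall fun n => (hu n).1 i), hs⟩,
      hconv⟩
end
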